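/- arXiv:1403.5873 — 2 statements merged into one kernel-verified Lean document; each statement's English description precedes it below -/
import Mathlib

section
/- In a regular category, a square of type (1) is a regular pushout — i.e. the comparison morphism ⟨g, c⟩: C → D×_B A to the pullback of d and f is a regular epimorphism — if and only if c g∘ = f∘ d, and this in turn holds if and only if g c∘ = d∘ f. -/
open CategoryTheory CategoryTheory.Limits

universe v u

namespace Paper

variable {𝒞 : Type u} [Category.{v} 𝒞]

/-- `f` is a regular epimorphism: it is a coequaliser of some pair of morphisms. -/
def IsRegEpi {X Y : 𝒞} (f : X ⟶ Y) : Prop :=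
  ∃ (Z : 𝒞) (a b : Z ⟶ X), a ≫ f = b ≫ f ∧
    ∀ {T : 𝒞} (h : X ⟶ T), a ≫ h = b ≫ h → ∃! u : Y ⟶ T, f ≫ u = h

/-- Regular epimorphisms are pullback-stable. -/
def RegEpisStable (𝒞 : Type u) [Category.{v} 𝒞] : Prop :=
  ∀ {P X Y Z : 𝒞} (p₁ : P ⟶ X) (p₂ : P ⟶ Y) (f : X ⟶ Z) (g : Y ⟶ Z),
    IsPullback p₁ p₂ f g → IsRegEpi g → IsRegEpi p₁

/-- Every kernel pair admits a coequaliser. -/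
def KernelPairsHaveCoequalisers (𝒞 : Type u) [Category.{v} 𝒞] : Prop :=
  ∀ {R X Y : 𝒞} (f : X ⟶ Y) (a b : R ⟶ X), IsKernelPair f a b →
    ∃ (Q : 𝒞) (q : X ⟶ Q), a ≫ q = b ≫ q ∧
      ∀ {T : 𝒞} (h : X ⟶ T), a ≫ h = b ≫ h → ∃! u : Q ⟶ T, q ≫ u = h

/-- A relation from `X` to `Y`: a jointly monomorphic span. -/
structure Rel (𝒞 : Type u) [Category.{v} 𝒞] (X Y : 𝒞) where
  R : 𝒞
  p1 : R ⟶ X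
  p2 : R ⟶ Y
  jm : ∀ {Z : 𝒞} (a b : Z ⟶ R), a ≫ p1 = b ≫ p1 → a ≫ p2 = b ≫ p2 → a = b

variable {X Y Z : 𝒞}

/-- `ρ` is a subrelation of `σ`. -/
def Rel.le (ρ σ : Rel 𝒞 X Y) : Prop :=
  ∃ j : ρ.R ⟶ σ.R, j ≫ σ.p1 = ρ.p1 ∧ j ≫ σ.p2 = ρ.p2

/-- `ρ` and `σ` are the same relation (isomorphic as subobjects of `X × Y`). -/
def Rel.equiv (ρ σ : Rel 𝒞 X Y) : Prop := ρ.le σ ∧ σ.le ρ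

/-- The opposite relation. -/
def Rel.op (ρ : Rel 𝒞 X Y) : Rel 𝒞 Y X :=
  ⟨ρ.R, ρ.p2, ρ.p1, fun a b h2 h1 => ρ.jm a b h1 h2⟩

/-- A morphism viewed as a relation. -/
def homRel (f : X ⟶ Y) : Rel 𝒞 X Y :=
  ⟨X, 𝟙 X, f, fun a b h _ => by simpa using h⟩

/-- The discrete (diagonal) relation on `X`. -/
def diagRel (X : 𝒞) : Rel 𝒞 X X := homRel (𝟙 X)

/-- The kernel pair `Eq(f)` of `f` as a relation on `X`. -/
noncomputable def kerPairRel [HasPullbacks 𝒞] (f : X ⟶ Y) : Rel 𝒞 X X :=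
  ⟨pullback f f, pullback.fst f f, pullback.snd f f,
    fun a b h1 h2 => pullback.hom_ext h1 h2⟩

/-- `τ` is the composite `σρ` (first `ρ` from `X` to `Y`, then `σ` from `Y` to `Z`),
i.e. the (regular epi, jointly mono) factorisation of the span induced on the
pullback of `ρ.p2` and `σ.p1`. -/
def IsRelComp [HasPullbacks 𝒞] (σ : Rel 𝒞 Y Z) (ρ : Rel 𝒞 X Y) (τ : Rel 𝒞 X Z) : Prop :=
  ∃ e : pullback ρ.p2 σ.p1 ⟶ τ.R, IsRegEpi e ∧
    e ≫ τ.p1 = pullback.fst ρ.p2 σ.p1 ≫ ρ.p1 ∧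
    e ≫ τ.p2 = pullback.snd ρ.p2 σ.p1 ≫ σ.p2

def Rel.IsReflexive (ρ : Rel 𝒞 X X) : Prop :=
  ∃ r : X ⟶ ρ.R, r ≫ ρ.p1 = 𝟙 X ∧ r ≫ ρ.p2 = 𝟙 X

def Rel.IsSymmetric (ρ : Rel 𝒞 X X) : Prop :=
  ∃ s : ρ.R ⟶ ρ.R, s ≫ ρ.p1 = ρ.p2 ∧ s ≫ ρ.p2 = ρ.p1

def Rel.IsTransitive [HasPullbacks 𝒞] (ρ : Rel 𝒞 X X) : Prop :=
  ∃ t : pullback ρ.p2 ρ.p1 ⟶ ρ.R,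
    t ≫ ρ.p1 = pullback.fst ρ.p2 ρ.p1 ≫ ρ.p1 ∧
    t ≫ ρ.p2 = pullback.snd ρ.p2 ρ.p1 ≫ ρ.p2

def Rel.IsEquivalence [HasPullbacks 𝒞] (ρ : Rel 𝒞 X X) : Prop :=
  ρ.IsReflexive ∧ ρ.IsSymmetric ∧ ρ.IsTransitive

/-- A finitely complete category is a Mal'tsev category when every reflexive
relation in it is an equivalence relation. -/
def IsMaltsev (𝒞 : Type u) [Category.{v} 𝒞] [HasPullbacks 𝒞] : Prop :=
  ∀ {X : 𝒞} (ρ : Rel 𝒞 X X), ρ.IsReflexive → ρ.IsEquivalence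

/-- A square of type (1): split epimorphisms `f` (with section `s`) and `g`
(with section `t`), regular epimorphisms `c` and `d`, with `f·c = d·g` and
`s·d = c·t`. -/
structure IsSquare1 {A B E D : 𝒞} (f : A ⟶ B) (s : B ⟶ A) (g : E ⟶ D) (t : D ⟶ E)
    (c : E ⟶ A) (d : D ⟶ B) : Prop where
  sec_f : s ≫ f = 𝟙 B
  sec_g : t ≫ g = 𝟙 D
  regepi_c : IsRegEpi c
  regepi_d : IsRegEpi d
  comm1 : c ≫ f = g ≫ d
  comm2 : d ≫ s = t ≫ c

/-- `N` is an ideal of morphisms. -/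
def IsIdeal (N : MorphismProperty 𝒞) : Prop :=
  ∀ {X Y Z : 𝒞} (f : X ⟶ Y) (g : Y ⟶ Z), N f ∨ N g → N (f ≫ g)

/-- `n` is an `N`-kernel of `f`. -/
def IsNKernel (N : MorphismProperty 𝒞) {X Y K : 𝒞} (f : X ⟶ Y) (n : K ⟶ X) : Prop :=
  N (n ≫ f) ∧ ∀ {Z : 𝒞} (m : Z ⟶ X), N (m ≫ f) → ∃! u : Z ⟶ K, u ≫ n = m

/-- Every morphism admits an `N`-kernel. -/
def HasNKernels (N : MorphismProperty 𝒞) : Prop :=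
  ∀ {X Y : 𝒞} (f : X ⟶ Y), ∃ (K : 𝒞) (n : K ⟶ X), IsNKernel N f n

/-- `τ` is the largest star subrelation `ρ*` of the relation `ρ`. -/
def IsLargestStarSub (N : MorphismProperty 𝒞) (ρ τ : Rel 𝒞 X Y) : Prop :=
  τ.le ρ ∧ N τ.p1 ∧ ∀ σ : Rel 𝒞 X Y, σ.le ρ → N σ.p1 → σ.le τ

/-- `(s1, s2)` is the star-kernel of `f`: the universal star coequalised by `f`. -/
def IsStarKernel (N : MorphismProperty 𝒞) {S X Y : 𝒞} (f : X ⟶ Y) (s1 s2 : S ⟶ X) : Prop :=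
  N s1 ∧ s1 ≫ f = s2 ≫ f ∧
    ∀ {T : 𝒞} (t1 t2 : T ⟶ X), N t1 → t1 ≫ f = t2 ≫ f →
      ∃! u : T ⟶ S, u ≫ s1 = t1 ∧ u ≫ s2 = t2

/-- `(ν1, ν2)` is the star of the pullback relation of `(g, δ)`: the universal
pair with `ν1 ∈ N` and `δ·ν1 = g·ν2`. -/
def IsStarPullbackRel (N : MorphismProperty 𝒞) {W E D P : 𝒞} (δ : W ⟶ D) (g : E ⟶ D)
    (ν1 : P ⟶ W) (ν2 : P ⟶ E) : Prop :=
  N ν1 ∧ ν1 ≫ δ = ν2 ≫ g ∧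
    ∀ {T : 𝒞} (t1 : T ⟶ W) (t2 : T ⟶ E), N t1 → t1 ≫ δ = t2 ≫ g →
      ∃! u : T ⟶ P, u ≫ ν1 = t1 ∧ u ≫ ν2 = t2

/-- `f` is a coequaliser of `(s1, s2)`. -/
def IsCoeqOf {S X Y : 𝒞} (f : X ⟶ Y) (s1 s2 : S ⟶ X) : Prop :=
  s1 ≫ f = s2 ≫ f ∧ ∀ {T : 𝒞} (h : X ⟶ T), s1 ≫ h = s2 ≫ h → ∃! u : Y ⟶ T, f ≫ u = h

/-- Star-regularity: every regular epimorphism is a coequaliser of a star. -/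
def StarRegular (𝒞 : Type u) [Category.{v} 𝒞] (N : MorphismProperty 𝒞) : Prop :=
  ∀ {X Y : 𝒞} (f : X ⟶ Y), IsRegEpi f →
    ∃ (S : 𝒞) (s1 s2 : S ⟶ X), N s1 ∧ IsCoeqOf f s1 s2

/-- `f` is saturating: the induced morphism between the `N`-kernels of the
identities is a regular epimorphism. -/
def Saturating (N : MorphismProperty 𝒞) {X Y : 𝒞} (f : X ⟶ Y) : Prop :=
  ∀ {KX KY : 𝒞} (nX : KX ⟶ X) (nY : KY ⟶ Y), IsNKernel N (𝟙 X) nX → IsNKernel N (𝟙 Y) nY →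
    ∀ u : KX ⟶ KY, u ≫ nY = nX ≫ f → IsRegEpi u

/-- `X` is an `N`-trivial object. -/
def NTrivial (N : MorphismProperty 𝒞) (X : 𝒞) : Prop := N (𝟙 X)

/-- The multi-pointed category has enough trivial objects: `N` is a closed ideal and
`N`-trivial objects are closed under subobjects and squares. -/
def EnoughTrivialObjects [HasBinaryProducts 𝒞] (N : MorphismProperty 𝒞) : Prop :=
  (∀ {X Y : 𝒞} (f : X ⟶ Y), N f → ∃ (T : 𝒞) (p : X ⟶ T) (q : T ⟶ Y),
      NTrivial N T ∧ p ≫ q = f) ∧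
  (∀ {S X : 𝒞} (m : S ⟶ X), Mono m → NTrivial N X → NTrivial N S) ∧
  (∀ X : 𝒞, NTrivial N X → NTrivial N (X ⨯ X))

/-- A square of type (1) is a star-regular pushout when `(c g°)* = f° d*`. -/
def IsStarRegularPushout [HasPullbacks 𝒞] (N : MorphismProperty 𝒞) {A B E D : 𝒞}
    (f : A ⟶ B) (g : E ⟶ D) (c : E ⟶ A) (d : D ⟶ B) : Prop :=
  ∀ (ρ τ μ : Rel 𝒞 D A) (ds : Rel 𝒞 D B),
    IsRelComp (homRel c) (Rel.op (homRel g)) ρ → IsLargestStarSub N ρ τ →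
    IsLargestStarSub N (homRel d) ds → IsRelComp (Rel.op (homRel f)) ds μ →
    τ.equiv μ

/-- 2-star-permutability: `Eq(f) Eq(g)* = Eq(g) Eq(f)*` for all regular
epimorphisms `f`, `g` with the same domain. -/
def TwoStarPermutable (𝒞 : Type u) [Category.{v} 𝒞] [HasPullbacks 𝒞]
    (N : MorphismProperty 𝒞) : Prop :=
  ∀ {X Y Z : 𝒞} (f : X ⟶ Y) (g : X ⟶ Z), IsRegEpi f → IsRegEpi g →
    ∀ (sf sg : Rel 𝒞 X X), IsLargestStarSub N (kerPairRel f) sf →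
      IsLargestStarSub N (kerPairRel g) sg →
    ∀ (τ₁ τ₂ : Rel 𝒞 X X), IsRelComp (kerPairRel f) sg τ₁ →
      IsRelComp (kerPairRel g) sf τ₂ → τ₁.equiv τ₂

section Pointed

variable [HasZeroMorphisms 𝒞]

/-- `k` is a kernel of `f`. -/
def IsKernelOf {K X Y : 𝒞} (k : K ⟶ X) (f : X ⟶ Y) : Prop :=
  k ≫ f = 0 ∧ ∀ {Z : 𝒞} (m : Z ⟶ X), m ≫ f = 0 → ∃! u : Z ⟶ K, u ≫ k = m

/-- `f` is a cokernel of `k`. -/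
def IsCokernelOf {X Y K : 𝒞} (f : X ⟶ Y) (k : K ⟶ X) : Prop :=
  k ≫ f = 0 ∧ ∀ {T : 𝒞} (h : X ⟶ T), k ≫ h = 0 → ∃! u : Y ⟶ T, f ≫ u = h

/-- Short exact sequence `K → X ↠ Y`. -/
def IsShortExact {K X Y : 𝒞} (k : K ⟶ X) (f : X ⟶ Y) : Prop :=
  IsKernelOf k f ∧ IsCokernelOf f k

/-- Subtractivity: every reflexive, left punctual relation is right punctual. -/
def IsSubtractive (𝒞 : Type u) [Category.{v} 𝒞] [HasZeroMorphisms 𝒞] : Prop :=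
  ∀ {X : 𝒞} (ρ : Rel 𝒞 X X), ρ.IsReflexive →
    (∃ l : X ⟶ ρ.R, l ≫ ρ.p1 = 𝟙 X ∧ l ≫ ρ.p2 = 0) →
    (∃ r : X ⟶ ρ.R, r ≫ ρ.p1 = 0 ∧ r ≫ ρ.p2 = 𝟙 X)

end Pointed

/-!
The composite `c g°` is the image of the span `(g, c) : E → D × A`, while `f° d` is the
pullback `D ×_B A` read as a relation; the comparison `⟨g, c⟩` always exhibits the former
inside the latter. Since regular epimorphisms lift against jointly monic spans, the two
relations agree exactly when the image of `⟨g, c⟩` is all of `D ×_B A`, i.e. when `⟨g, c⟩`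
is a regular epimorphism. The second equivalence is the first one for the transposed square,
whose comparison map differs from `⟨g, c⟩` by the symmetry of the pullback.
-/

section RegularEpi

variable {X Y : 𝒞}

theorem isRegEpi_iff_isRegularEpi (f : X ⟶ Y) : IsRegEpi f ↔ IsRegularEpi f := by
  constructor
  · rintro ⟨W, a, b, w, hf⟩
    exact isRegularEpi_of_regularEpi
      ⟨W, a, b, w, Cofork.IsColimit.ofExistsUnique fun s => hf s.π s.condition⟩
  · rintro ⟨⟨h⟩⟩
    exact ⟨h.W, h.left, h.right, h.w, fun k hk => Cofork.IsColimit.existsUnique h.isColimit k hk⟩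

theorem IsRegEpi.epi {f : X ⟶ Y} (hf : IsRegEpi f) : Epi f :=
  have := (isRegEpi_iff_isRegularEpi f).1 hf
  inferInstance

theorem isRegEpi_of_isIso (f : X ⟶ Y) [IsIso f] : IsRegEpi f :=
  (isRegEpi_iff_isRegularEpi f).2 inferInstance

theorem isRegEpi_iso_comp_iff {Z : 𝒞} (i : X ⟶ Y) [IsIso i] (f : Y ⟶ Z) :
    IsRegEpi (i ≫ f) ↔ IsRegEpi f := by
  simpa only [isRegEpi_iff_isRegularEpi, MorphismProperty.regularEpi_iff] using
    MorphismProperty.cancel_left_of_respectsIso (MorphismProperty.regularEpi 𝒞) i f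

theorem isRegEpi_comp_iso_iff {Z : 𝒞} (f : X ⟶ Y) (i : Y ⟶ Z) [IsIso i] :
    IsRegEpi (f ≫ i) ↔ IsRegEpi f := by
  simpa only [isRegEpi_iff_isRegularEpi, MorphismProperty.regularEpi_iff] using
    MorphismProperty.cancel_right_of_respectsIso (MorphismProperty.regularEpi 𝒞) f i

end RegularEpi

section RegularCategory

variable [HasPullbacks 𝒞] {X Y : 𝒞}

theorem exists_isRegEpi_cover (hstab : RegEpisStable 𝒞) {Q R : 𝒞} {q : X ⟶ Q}
    (hq : IsRegEpi q) (a : R ⟶ Q) :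
    ∃ (W : 𝒞) (p : W ⟶ R) (u : W ⟶ X), IsRegEpi p ∧ p ≫ a = u ≫ q :=
  ⟨_, pullback.fst a q, pullback.snd a q,
    hstab _ _ _ _ (IsPullback.of_hasPullback a q) hq, pullback.condition⟩

theorem mono_of_isRegEpi_of_coequalizes (hstab : RegEpisStable 𝒞) {Q : 𝒞} {h : X ⟶ Y}
    {q : X ⟶ Q} {m : Q ⟶ Y} (hq : IsRegEpi q) (hqm : q ≫ m = h)
    (hq_coeq : ∀ {Z : 𝒞} (u v : Z ⟶ X), u ≫ h = v ≫ h → u ≫ q = v ≫ q) : Mono m := by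
  constructor
  intro R a b hab
  -- pull `q` back along `a`, then along `p ≫ b`, to lift both `a` and `b` through `q`
  obtain ⟨W, p, u, hp, hu⟩ := exists_isRegEpi_cover hstab hq a
  obtain ⟨W', p', v, hp', hv⟩ := exists_isRegEpi_cover hstab hq (p ≫ b)
  have huv : (p' ≫ u) ≫ q = v ≫ q := hq_coeq _ _ <| by
    simp only [← hqm, Category.assoc]
    rw [← reassoc_of% hu, hab, reassoc_of% hv]
  have := hp.epi
  have := hp'.epi
  rw [← cancel_epi p, ← cancel_epi p', hu, ← Category.assoc, huv, ← hv]

theorem exists_isRegEpi_mono_fac (hcoeq : KernelPairsHaveCoequalisers 𝒞)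
    (hstab : RegEpisStable 𝒞) (h : X ⟶ Y) :
    ∃ (Q : 𝒞) (q : X ⟶ Q) (m : Q ⟶ Y), IsRegEpi q ∧ Mono m ∧ q ≫ m = h := by
  obtain ⟨Q, q, hq, hquniv⟩ := hcoeq h _ _ (IsPullback.of_hasPullback h h)
  obtain ⟨m, hqm, -⟩ := hquniv h pullback.condition
  have hq' : IsRegEpi q := ⟨_, _, _, hq, hquniv⟩
  refine ⟨Q, q, m, hq', mono_of_isRegEpi_of_coequalizes hstab hq' hqm fun u v huv => ?_, hqm⟩
  simpa only [pullback.lift_fst_assoc, pullback.lift_snd_assoc] using pullback.lift u v huv ≫= hq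

end RegularCategory

section Relations

variable {X Y : 𝒞}

theorem IsRegEpi.exists_lift_rel {S T : 𝒞} {e : S ⟶ T} (he : IsRegEpi e) (τ : Rel 𝒞 X Y)
    {x : T ⟶ X} {y : T ⟶ Y} (k : S ⟶ τ.R) (hx : k ≫ τ.p1 = e ≫ x) (hy : k ≫ τ.p2 = e ≫ y) :
    ∃ j : T ⟶ τ.R, j ≫ τ.p1 = x ∧ j ≫ τ.p2 = y := by
  have := he.epi
  obtain ⟨Z, a, b, hab, huniv⟩ := he
  obtain ⟨j, hj, -⟩ := huniv k <| τ.jm _ _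
    (by rw [Category.assoc, Category.assoc, hx, reassoc_of% hab])
    (by rw [Category.assoc, Category.assoc, hy, reassoc_of% hab])
  refine ⟨j, ?_, ?_⟩
  · rw [← cancel_epi e, reassoc_of% hj, hx]
  · rw [← cancel_epi e, reassoc_of% hj, hy]

def Rel.restrict (ρ : Rel 𝒞 X Y) {Q : 𝒞} (m : Q ⟶ ρ.R) [Mono m] : Rel 𝒞 X Y :=
  ⟨Q, m ≫ ρ.p1, m ≫ ρ.p2, fun a b h1 h2 =>
    (cancel_mono m).1 (ρ.jm _ _ (by simpa using h1) (by simpa using h2))⟩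

theorem Rel.isIso_of_le_restrict (ρ : Rel 𝒞 X Y) {Q : 𝒞} (m : Q ⟶ ρ.R) [Mono m]
    (h : ρ.le (ρ.restrict m)) : IsIso m := by
  obtain ⟨j, h1, h2⟩ : ∃ j : ρ.R ⟶ Q, j ≫ m ≫ ρ.p1 = ρ.p1 ∧ j ≫ m ≫ ρ.p2 = ρ.p2 := h
  have : IsSplitEpi m := ⟨⟨j, ρ.jm _ _ (by simpa using h1) (by simpa using h2)⟩⟩
  exact isIso_of_mono_of_isSplitEpi m

variable [HasPullbacks 𝒞]

noncomputable abbrev pullbackRel {B : 𝒞} (d : X ⟶ B) (f : Y ⟶ B) : Rel 𝒞 X Y :=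
  ⟨pullback d f, pullback.fst d f, pullback.snd d f, fun _ _ h1 h2 => pullback.hom_ext h1 h2⟩

theorem isRelComp_homRel_op_homRel_iff {E : 𝒞} (c : E ⟶ Y) (g : E ⟶ X) (τ : Rel 𝒞 X Y) :
    IsRelComp (homRel c) (homRel g).op τ ↔
      ∃ e : E ⟶ τ.R, IsRegEpi e ∧ e ≫ τ.p1 = g ∧ e ≫ τ.p2 = c := by
  have hfst : pullback.fst (𝟙 E) (𝟙 E) = pullback.snd (𝟙 E) (𝟙 E) := by
    simpa using pullback.condition (f := 𝟙 E) (g := 𝟙 E)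
  simp only [IsRelComp, homRel, Rel.op, ← hfst]
  constructor
  · rintro ⟨e, he, h1, h2⟩
    refine ⟨inv (pullback.fst _ _) ≫ e, (isRegEpi_iso_comp_iff _ _).2 he, ?_, ?_⟩ <;>
      simp [h1, h2]
  · rintro ⟨e, he, h1, h2⟩
    exact ⟨pullback.fst _ _ ≫ e, (isRegEpi_iso_comp_iff _ _).2 he, by simp [h1], by simp [h2]⟩

theorem isRelComp_op_homRel_homRel_iff {B : 𝒞} (f : Y ⟶ B) (d : X ⟶ B) (τ : Rel 𝒞 X Y) :
    IsRelComp (homRel f).op (homRel d) τ ↔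
      ∃ e : pullback d f ⟶ τ.R, IsRegEpi e ∧
        e ≫ τ.p1 = pullback.fst d f ∧ e ≫ τ.p2 = pullback.snd d f := by
  simp only [IsRelComp, homRel, Rel.op, Category.comp_id]

end Relations

section RegularPushout

variable [HasPullbacks 𝒞] {A B E D : 𝒞} (f : A ⟶ B) (g : E ⟶ D) (c : E ⟶ A) (d : D ⟶ B)

theorem relComp_equiv_of_isRegEpi_pullback_lift (comm : c ≫ f = g ≫ d)
    (hre : IsRegEpi (pullback.lift g c comm.symm : E ⟶ pullback d f)) (τ₁ τ₂ : Rel 𝒞 D A)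
    (h₁ : IsRelComp (homRel c) (homRel g).op τ₁) (h₂ : IsRelComp (homRel f).op (homRel d) τ₂) :
    τ₁.equiv τ₂ := by
  obtain ⟨e₁, he₁, he₁g, he₁c⟩ := (isRelComp_homRel_op_homRel_iff c g τ₁).1 h₁
  obtain ⟨e₂, he₂, he₂d, he₂f⟩ := (isRelComp_op_homRel_homRel_iff f d τ₂).1 h₂
  constructor
  · exact he₁.exists_lift_rel τ₂ (pullback.lift g c comm.symm ≫ e₂)
      (by rw [Category.assoc, he₂d, pullback.lift_fst, he₁g])
      (by rw [Category.assoc, he₂f, pullback.lift_snd, he₁c])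
  · obtain ⟨k, hk₁, hk₂⟩ := hre.exists_lift_rel τ₁ e₁ (x := pullback.fst d f)
      (y := pullback.snd d f) (by rw [he₁g, pullback.lift_fst]) (by rw [he₁c, pullback.lift_snd])
    exact he₂.exists_lift_rel τ₁ k (by rw [hk₁, he₂d]) (by rw [hk₂, he₂f])

theorem isRegEpi_pullback_lift_of_relComp_equiv (hcoeq : KernelPairsHaveCoequalisers 𝒞)
    (hstab : RegEpisStable 𝒞) (comm : c ≫ f = g ≫ d)
    (h : ∀ τ₁ τ₂ : Rel 𝒞 D A, IsRelComp (homRel c) (homRel g).op τ₁ →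
      IsRelComp (homRel f).op (homRel d) τ₂ → τ₁.equiv τ₂) :
    IsRegEpi (pullback.lift g c comm.symm : E ⟶ pullback d f) := by
  obtain ⟨Q, q, m, hq, hm, hqm⟩ :=
    exists_isRegEpi_mono_fac hcoeq hstab (pullback.lift g c comm.symm)
  have h₁ : IsRelComp (homRel c) (homRel g).op ((pullbackRel d f).restrict m) :=
    (isRelComp_homRel_op_homRel_iff c g _).2
      ⟨q, hq, by simp [Rel.restrict, reassoc_of% hqm, pullback.lift_fst],
        by simp [Rel.restrict, reassoc_of% hqm, pullback.lift_snd]⟩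
  have h₂ : IsRelComp (homRel f).op (homRel d) (pullbackRel d f) :=
    (isRelComp_op_homRel_homRel_iff f d _).2
      ⟨𝟙 _, isRegEpi_of_isIso _, Category.id_comp _, Category.id_comp _⟩
  have := (pullbackRel d f).isIso_of_le_restrict m (h _ _ h₁ h₂).2
  rw [← hqm, isRegEpi_comp_iso_iff]
  exact hq

theorem isRegEpi_pullback_lift_iff_relComp_equiv (hcoeq : KernelPairsHaveCoequalisers 𝒞)
    (hstab : RegEpisStable 𝒞) (comm : c ≫ f = g ≫ d) :
    IsRegEpi (pullback.lift g c comm.symm : E ⟶ pullback d f) ↔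
      ∀ τ₁ τ₂ : Rel 𝒞 D A, IsRelComp (homRel c) (homRel g).op τ₁ →
        IsRelComp (homRel f).op (homRel d) τ₂ → τ₁.equiv τ₂ :=
  ⟨relComp_equiv_of_isRegEpi_pullback_lift f g c d comm,
    isRegEpi_pullback_lift_of_relComp_equiv f g c d hcoeq hstab comm⟩

theorem isRegEpi_pullback_lift_symm_iff (comm : c ≫ f = g ≫ d) :
    IsRegEpi (pullback.lift g c comm.symm : E ⟶ pullback d f) ↔
      IsRegEpi (pullback.lift c g comm : E ⟶ pullback f d) := by
  rw [← isRegEpi_comp_iso_iff _ (pullbackSymmetry d f).hom]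
  congr! 1
  ext <;> simp [pullback.lift_fst, pullback.lift_snd]

end RegularPushout

/-- In a regular category, a square of type (1) is a regular
pushout (the comparison `⟨g,c⟩ : C → D ×_B A` is a regular epimorphism) iff
`c g° = f° d`, iff `g c° = d° f`. -/
theorem statement1 [HasFiniteLimits 𝒞]
    (hcoeq : KernelPairsHaveCoequalisers 𝒞) (hstab : RegEpisStable 𝒞)
    {A B E D : 𝒞} (f : A ⟶ B) (s : B ⟶ A) (g : E ⟶ D) (t : D ⟶ E)
    (c : E ⟶ A) (d : D ⟶ B) (hsq : IsSquare1 f s g t c d) :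
    (IsRegEpi (pullback.lift g c hsq.comm1.symm : E ⟶ pullback d f) ↔
      (∀ (τ₁ τ₂ : Rel 𝒞 D A),
        IsRelComp (homRel c) (Rel.op (homRel g)) τ₁ →
        IsRelComp (Rel.op (homRel f)) (homRel d) τ₂ → τ₁.equiv τ₂)) ∧
    ((∀ (τ₁ τ₂ : Rel 𝒞 D A),
        IsRelComp (homRel c) (Rel.op (homRel g)) τ₁ →
        IsRelComp (Rel.op (homRel f)) (homRel d) τ₂ → τ₁.equiv τ₂) ↔
      (∀ (τ₁ τ₂ : Rel 𝒞 A D),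
        IsRelComp (homRel g) (Rel.op (homRel c)) τ₁ →
        IsRelComp (Rel.op (homRel d)) (homRel f) τ₂ → τ₁.equiv τ₂)) := by
  have key := isRegEpi_pullback_lift_iff_relComp_equiv f g c d hcoeq hstab hsq.comm1
  have key' := isRegEpi_pullback_lift_iff_relComp_equiv d c g f hcoeq hstab hsq.comm1.symm
  exact ⟨key, key.symm.trans ((isRegEpi_pullback_lift_symm_iff f g c d hsq.comm1).trans key')⟩

end Paper
end

section
/- In a regular multi-pointed category with kernels, for any square of type (1), the direct images along the split epimorphism g of the kernel pair of c and of its largest star subrelation satisfy g⟨Eq(c)⟩ = Eq(d) and g⟨Eq(c)*⟩ = Eq(d)*. -/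
/-!
Since `d ∘ g = f ∘ c`, the image under `g` of anything inside `Eq(c)` lies inside `Eq(d)`
(cancel the regular epimorphism of the image factorisation). Conversely the section `t`
carries `Eq(d)` into `Eq(c)`, because `c ∘ t = s ∘ d`, and `g ∘ t = 1` makes `g⟨-⟩` undo
this, so `Eq(d) ≤ g⟨Eq(c)⟩`. For the stars the same two inclusions are combined with
maximality of `Eq(c)*` and `Eq(d)*`; what remains is that `g⟨Eq(c)*⟩` is again a star,
i.e. that an ideal with kernels is closed under quotients by regular epimorphisms.
-/

open CategoryTheory CategoryTheory.Limits

universe v u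

namespace Paper

variable {𝒞 : Type u} [Category.{v} 𝒞]

variable {X Y Z : 𝒞}

/-- `τ` is the direct image of the relation `ρ` on `X` along the regular
epimorphism `h : X → Y`, i.e. the (regular epi, jointly mono) factorisation of
`⟨h·ρ.p1, h·ρ.p2⟩`. -/
def IsDirectImage {X Y : 𝒞} (h : X ⟶ Y) (ρ : Rel 𝒞 X X) (τ : Rel 𝒞 Y Y) : Prop :=
  ∃ e : ρ.R ⟶ τ.R, IsRegEpi e ∧ e ≫ τ.p1 = ρ.p1 ≫ h ∧ e ≫ τ.p2 = ρ.p2 ≫ h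

theorem Rel.le_refl (ρ : Rel 𝒞 X Y) : ρ.le ρ :=
  ⟨𝟙 _, Category.id_comp _, Category.id_comp _⟩

theorem Rel.le_kerPairRel_iff [HasPullbacks 𝒞] (ρ : Rel 𝒞 X X) (k : X ⟶ Y) :
    ρ.le (kerPairRel k) ↔ ρ.p1 ≫ k = ρ.p2 ≫ k := by
  constructor
  · rintro ⟨j, hj1, hj2⟩
    rw [← hj1, ← hj2, Category.assoc, Category.assoc]
    exact congrArg (j ≫ ·) pullback.condition
  · intro hk
    exact ⟨pullback.lift _ _ hk, pullback.lift_fst _ _ _, pullback.lift_snd _ _ _⟩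

def Rel.mapMono (ρ : Rel 𝒞 X X) (m : X ⟶ Y) [Mono m] : Rel 𝒞 Y Y :=
  ⟨ρ.R, ρ.p1 ≫ m, ρ.p2 ≫ m, fun a b h1 h2 =>
    ρ.jm a b ((cancel_mono m).1 (by simpa using h1)) ((cancel_mono m).1 (by simpa using h2))⟩

theorem Rel.mapMono_le_kerPairRel [HasPullbacks 𝒞] {A B : 𝒞} {σ : Rel 𝒞 X X}
    {d : X ⟶ B} {s : B ⟶ A} {t : X ⟶ Y} [Mono t] {c : Y ⟶ A}
    (hσ : σ.le (kerPairRel d)) (hcomm : d ≫ s = t ≫ c) :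
    (σ.mapMono t).le (kerPairRel c) := by
  rw [Rel.le_kerPairRel_iff] at hσ ⊢
  change (σ.p1 ≫ t) ≫ c = (σ.p2 ≫ t) ≫ c
  rw [Category.assoc, Category.assoc, ← hcomm, reassoc_of% hσ]

theorem IsRegEpi.cancel {e : X ⟶ Y} (he : IsRegEpi e) {u v : Y ⟶ Z}
    (h : e ≫ u = e ≫ v) : u = v := by
  obtain ⟨W, a, b, hab, huniv⟩ := he
  obtain ⟨w, -, hw⟩ := huniv (e ≫ u) (by rw [reassoc_of% hab])
  exact (hw u rfl).trans (hw v h.symm).symm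

theorem IsNKernel.mono {N : MorphismProperty 𝒞} (hN : IsIdeal N) {K : 𝒞} {f : X ⟶ Y}
    {n : K ⟶ X} (hn : IsNKernel N f n) : Mono n := by
  refine ⟨fun {W} u₁ u₂ h => ?_⟩
  obtain ⟨w, -, hw⟩ := hn.2 (u₁ ≫ n) (by rw [Category.assoc]; exact hN _ _ (Or.inr hn.1))
  exact (hw u₁ rfl).trans (hw u₂ h.symm).symm

/-- `e ≫ x` factors through the monic `N`-kernel of `𝟙`, and the factorisation descends
along `e`. -/
theorem IsIdeal.of_regEpi_comp {N : MorphismProperty 𝒞} (hN : IsIdeal N)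
    (hker : HasNKernels N) {e : X ⟶ Y} (he : IsRegEpi e) {x : Y ⟶ Z} (hx : N (e ≫ x)) :
    N x := by
  obtain ⟨K, n, hn⟩ := hker (𝟙 Z)
  have := hn.mono hN
  obtain ⟨u, hu, -⟩ := hn.2 (e ≫ x) (by rwa [Category.comp_id])
  obtain ⟨W, a, b, hab, huniv⟩ := id he
  obtain ⟨v, hv, -⟩ := huniv u (by rw [← cancel_mono n, Category.assoc, Category.assoc, hu,
    reassoc_of% hab])
  have hvn : v ≫ n = x := he.cancel (by rw [reassoc_of% hv, hu])
  rw [← hvn]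
  exact hN _ _ (Or.inr (by simpa using hn.1))

namespace IsDirectImage

variable {h : X ⟶ Y} {ρ : Rel 𝒞 X X} {τ : Rel 𝒞 Y Y}

theorem le_kerPairRel [HasPullbacks 𝒞] (hτ : IsDirectImage h ρ τ) {A B : 𝒞} {c : X ⟶ A}
    {f : A ⟶ B} {d : Y ⟶ B} (hρ : ρ.le (kerPairRel c)) (hcomm : c ≫ f = h ≫ d) :
    τ.le (kerPairRel d) := by
  obtain ⟨e, he, he1, he2⟩ := hτ
  rw [Rel.le_kerPairRel_iff] at hρ ⊢
  apply he.cancel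
  rw [reassoc_of% he1, reassoc_of% he2, ← hcomm, reassoc_of% hρ]

theorem le_of_mapMono_le (hτ : IsDirectImage h ρ τ) {σ : Rel 𝒞 Y Y} {t : Y ⟶ X} [Mono t]
    (ht : t ≫ h = 𝟙 Y) (hσ : (σ.mapMono t).le ρ) : σ.le τ := by
  obtain ⟨e, -, he1, he2⟩ := hτ
  obtain ⟨k, hk1, hk2⟩ : ∃ k : σ.R ⟶ ρ.R, k ≫ ρ.p1 = σ.p1 ≫ t ∧ k ≫ ρ.p2 = σ.p2 ≫ t := hσ
  refine ⟨k ≫ e, ?_, ?_⟩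
  · rw [Category.assoc, he1, reassoc_of% hk1, ht, Category.comp_id]
  · rw [Category.assoc, he2, reassoc_of% hk2, ht, Category.comp_id]

theorem mem_p1 {N : MorphismProperty 𝒞} (hN : IsIdeal N) (hker : HasNKernels N)
    (hτ : IsDirectImage h ρ τ) (hρ : N ρ.p1) : N τ.p1 := by
  obtain ⟨e, he, he1, -⟩ := hτ
  exact hN.of_regEpi_comp hker he (he1 ▸ hN _ _ (Or.inl hρ))

end IsDirectImage

theorem statement5_general [HasFiniteLimits 𝒞]
    (N : MorphismProperty 𝒞) (hN : IsIdeal N) (hker : HasNKernels N)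
    {A B E D : 𝒞} (f : A ⟶ B) (s : B ⟶ A) (g : E ⟶ D) (t : D ⟶ E)
    (c : E ⟶ A) (d : D ⟶ B) (hsq : IsSquare1 f s g t c d) :
    (∀ τ : Rel 𝒞 D D, IsDirectImage g (kerPairRel c) τ → τ.equiv (kerPairRel d)) ∧
    (∀ (sc : Rel 𝒞 E E) (τ sd : Rel 𝒞 D D),
      IsLargestStarSub N (kerPairRel c) sc → IsDirectImage g sc τ →
      IsLargestStarSub N (kerPairRel d) sd → τ.equiv sd) := by
  have : Mono t := mono_of_mono_fac hsq.sec_g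
  have hlift : ∀ σ : Rel 𝒞 D D, σ.le (kerPairRel d) → (σ.mapMono t).le (kerPairRel c) :=
    fun σ hσ => Rel.mapMono_le_kerPairRel hσ hsq.comm2
  refine ⟨fun τ hτ => ⟨hτ.le_kerPairRel (Rel.le_refl _) hsq.comm1,
    hτ.le_of_mapMono_le hsq.sec_g (hlift _ (Rel.le_refl _))⟩, ?_⟩
  rintro sc τ sd ⟨hsc, hscN, hscMax⟩ hτ ⟨hsd, hsdN, hsdMax⟩
  exact ⟨hsdMax τ (hτ.le_kerPairRel hsc hsq.comm1) (hτ.mem_p1 hN hker hscN),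
    hτ.le_of_mapMono_le hsq.sec_g (hscMax _ (hlift sd hsd) (hN _ _ (Or.inl hsdN)))⟩

/-- In a regular multi-pointed category with kernels, for any square
of type (1) one has `g⟨Eq(c)⟩ = Eq(d)` and `g⟨Eq(c)*⟩ = Eq(d)*`. -/
theorem statement5 [HasFiniteLimits 𝒞]
    (hcoeq : KernelPairsHaveCoequalisers 𝒞) (hstab : RegEpisStable 𝒞)
    (N : MorphismProperty 𝒞) (hN : IsIdeal N) (hker : HasNKernels N)
    {A B E D : 𝒞} (f : A ⟶ B) (s : B ⟶ A) (g : E ⟶ D) (t : D ⟶ E)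
    (c : E ⟶ A) (d : D ⟶ B) (hsq : IsSquare1 f s g t c d) :
    (∀ τ : Rel 𝒞 D D, IsDirectImage g (kerPairRel c) τ → τ.equiv (kerPairRel d)) ∧
    (∀ (sc : Rel 𝒞 E E) (τ sd : Rel 𝒞 D D),
      IsLargestStarSub N (kerPairRel c) sc → IsDirectImage g sc τ →
      IsLargestStarSub N (kerPairRel d) sd → τ.equiv sd) :=
  statement5_general N hN hker f s g t c d hsq

end Paper
end
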